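/- Let n ≥ 1 and let V = ℂⁿ carry the permutation representation of the symmetric group Sₙ. Then for every finite-dimensional irreducible complex representation W of Sₙ, there exists a nonzero Sₙ-equivariant linear map W → V^{⊗(n−1)}, where V^{⊗(n−1)} carries the diagonal Sₙ-action. -/

import Mathlib

/-!
The `Sₙ`-orbit of `e₁ ⊗ ⋯ ⊗ e_{n-1}` in `V^{⊗(n-1)}` is free, because a permutation is
determined by its values on `n - 1` points; hence these tensors span a copy of the regular
representation. Every nonzero representation `W` maps nontrivially into the regular
representation, by `w ↦ ∑_g φ(g⁻¹ w) g` for any functional `φ ≠ 0` on `W`.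
-/

open scoped TensorProduct

/-- The `t`-fold tensor power `V^{⊗t}` of `V = ℂⁿ` (realized as `Fin n →₀ ℂ`, with basis
vectors indexed by `{1, …, n}`). -/
noncomputable def TPow (n t : ℕ) : Type := ⨂[ℂ] _ : Fin t, (Fin n →₀ ℂ)

noncomputable instance (n t : ℕ) : AddCommGroup (TPow n t) :=
  inferInstanceAs (AddCommGroup (⨂[ℂ] _ : Fin t, (Fin n →₀ ℂ)))

noncomputable instance (n t : ℕ) : Module ℂ (TPow n t) :=
  inferInstanceAs (Module ℂ (⨂[ℂ] _ : Fin t, (Fin n →₀ ℂ)))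

/-- The diagonal action of a permutation `σ` on `V^{⊗t}`, where `σ` acts on each tensor
factor of `V = ℂⁿ` by the permutation representation (permuting the basis vectors). -/
noncomputable def diagPerm (n t : ℕ) (σ : Equiv.Perm (Fin n)) : TPow n t →ₗ[ℂ] TPow n t :=
  PiTensorProduct.map (fun _ => Finsupp.lmapDomain ℂ ℂ (fun x : Fin n => σ • x))

theorem Equiv.Perm.eq_of_eqOn_compl {α : Type*} [DecidableEq α] [Fintype α]
    {f g : Equiv.Perm α} {s : Set α} (hs : s.Subsingleton) (h : Set.EqOn f g sᶜ) :
    f = g := by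
  have hsupp : ∀ x ∈ (f⁻¹ * g).support, x ∈ s := fun x hx => by
    by_contra hxs
    rw [Equiv.Perm.mem_support, Equiv.Perm.mul_apply, ← h hxs] at hx
    exact hx (Equiv.Perm.inv_eq_iff_eq.2 rfl)
  have hcard : (f⁻¹ * g).support.card ≤ 1 :=
    Finset.card_le_one.2 fun a ha b hb => hs (hsupp a ha) (hsupp b hb)
  exact inv_mul_eq_one.1 (Equiv.Perm.card_support_le_one.1 hcard)

theorem Equiv.Perm.comp_castLE_injective (n : ℕ) :
    Function.Injective fun g : Equiv.Perm (Fin n) => ⇑g ∘ Fin.castLE (n.sub_le 1) := by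
  intro f g hfg
  refine Equiv.Perm.eq_of_eqOn_compl (s := {x | n - 1 ≤ x})
    (fun a ha b hb => by simp only [Set.mem_ofPred_eq] at ha hb; omega) fun x hx => ?_
  simpa [Fin.castLE] using congr_fun hfg ⟨x, by simp at hx; omega⟩

section OrbitMap

variable {k G W M : Type*} [CommRing k] [Group G] [Fintype G]
  [AddCommGroup W] [Module k W] [AddCommGroup M] [Module k M]

noncomputable def orbitMap (ρ : Representation k G W) (φ : Module.Dual k W) (x : G → M) :
    W →ₗ[k] M :=
  ∑ g, LinearMap.toSpanSingleton k M (x g) ∘ₗ φ ∘ₗ ρ g⁻¹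

variable (ρ : Representation k G W) (φ : Module.Dual k W) (x : G → M)

theorem orbitMap_apply (w : W) : orbitMap ρ φ x w = ∑ g, φ (ρ g⁻¹ w) • x g := by
  simp [orbitMap]

theorem orbitMap_comp_apply {τ : G → M →ₗ[k] M} (hτ : ∀ g h, τ g (x h) = x (g * h))
    (g : G) (w : W) : orbitMap ρ φ x (ρ g w) = τ g (orbitMap ρ φ x w) := by
  simp only [orbitMap_apply, map_sum, map_smul, hτ]
  refine (Fintype.sum_equiv (Equiv.mulLeft g) _ _ fun h => ?_).symm
  simp [← Module.End.mul_apply, ← map_mul, mul_assoc]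

theorem orbitMap_ne_zero (hx : LinearIndependent k x) {w : W} (hw : φ w ≠ 0) :
    orbitMap ρ φ x ≠ 0 := by
  intro h0
  have hcoeff := Fintype.linearIndependent_iff.1 hx (fun g => φ (ρ g⁻¹ w))
    (by rw [← orbitMap_apply, h0, LinearMap.zero_apply]) 1
  exact hw (by simpa using hcoeff)

end OrbitMap

theorem Representation.exists_ne_zero_equivariant_of_linearIndependent_orbit
    {k G W M : Type*} [CommRing k] [Group G] [Fintype G]
    [AddCommGroup W] [Module k W] [Module.Projective k W] [Nontrivial W]
    [AddCommGroup M] [Module k M] (ρ : Representation k G W) {τ : G → M →ₗ[k] M} {x : G → M}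
    (hx : LinearIndependent k x) (hτ : ∀ g h, τ g (x h) = x (g * h)) :
    ∃ f : W →ₗ[k] M, f ≠ 0 ∧ ∀ g w, f (ρ g w) = τ g (f w) := by
  obtain ⟨w, hw⟩ := exists_ne (0 : W)
  obtain ⟨φ, hφ⟩ := Module.Projective.exists_dual_ne_zero k hw
  exact ⟨orbitMap ρ φ x, orbitMap_ne_zero ρ φ x hx hφ, orbitMap_comp_apply ρ φ x hτ⟩

noncomputable def permTensor (n : ℕ) (g : Equiv.Perm (Fin n)) : TPow n (n - 1) :=
  ⨂ₜ[ℂ] i, Finsupp.single (g (Fin.castLE (n.sub_le 1) i)) 1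

theorem diagPerm_permTensor (n : ℕ) (g h : Equiv.Perm (Fin n)) :
    diagPerm n (n - 1) g (permTensor n h) = permTensor n (g * h) :=
  (PiTensorProduct.map_tprod _ _).trans
    (congrArg _ (funext fun _ => Finsupp.mapDomain_single))

theorem linearIndependent_permTensor (n : ℕ) : LinearIndependent ℂ (permTensor n) := by
  have hb := (Basis.piTensorProduct fun _ : Fin (n - 1) =>
    Finsupp.basisSingleOne (R := ℂ) (ι := Fin n)).linearIndependent.comp _
    (Equiv.Perm.comp_castLE_injective n)
  simp only [Function.comp_def, Basis.piTensorProduct_apply, Finsupp.coe_basisSingleOne] at hb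
  exact hb

theorem stmt7_general (n : ℕ)
    (W : Type) [AddCommGroup W] [Module ℂ W] [Nontrivial W]
    (σ : Representation ℂ (Equiv.Perm (Fin n)) W) :
    ∃ f : W →ₗ[ℂ] TPow n (n - 1),
      f ≠ 0 ∧ ∀ (g : Equiv.Perm (Fin n)) (w : W), f (σ g w) = diagPerm n (n - 1) g (f w) :=
  σ.exists_ne_zero_equivariant_of_linearIndependent_orbit (linearIndependent_permTensor n)
    (diagPerm_permTensor n)

/-- Let `n ≥ 1` and let `V = ℂⁿ` carry the permutation representation of `Sₙ`.
Every finite-dimensional irreducible complex representation `W` of `Sₙ` admits a nonzero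
`Sₙ`-equivariant linear map `W → V^{⊗(n-1)}` (diagonal action on the tensor power). -/
theorem stmt7 (n : ℕ) (hn : 1 ≤ n)
    (W : Type) [AddCommGroup W] [Module ℂ W] [FiniteDimensional ℂ W] [Nontrivial W]
    (σ : Representation ℂ (Equiv.Perm (Fin n)) W)
    (hirr : ∀ p : Submodule ℂ W, (∀ g : Equiv.Perm (Fin n), ∀ w ∈ p, σ g w ∈ p) →
      p = ⊥ ∨ p = ⊤) :
    ∃ f : W →ₗ[ℂ] TPow n (n - 1),
      f ≠ 0 ∧ ∀ (g : Equiv.Perm (Fin n)) (w : W), f (σ g w) = diagPerm n (n - 1) g (f w) :=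
  stmt7_general n W σ
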